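/- With the above setup, D♯_{Q̄}(I_p ⊗ 1₂) = D♯_{Q̃}(I_p ⊗ 1₂) and (I_p ⊗ 1₂ᵀ)D♯_{Q̄} = (I_p ⊗ 1₂ᵀ)D♯_{Q̃}. -/

import Mathlib

open Matrix MeasureTheory

/-- `Q` is a generator matrix of a finite CTMC: nonnegative off-diagonal entries
and zero row sums. -/
def IsGenerator {n : Type*} [Fintype n] (Q : Matrix n n ℝ) : Prop :=
  (∀ i j, i ≠ j → 0 ≤ Q i j) ∧ ∀ i, ∑ j, Q i j = 0

/-- Irreducibility of the CTMC with generator `Q`: the transition matrix `e^Q`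
is entrywise positive. -/
def IsIrreducibleGen {n : Type*} [Fintype n] [DecidableEq n] (Q : Matrix n n ℝ) : Prop :=
  ∀ i j, 0 < NormedSpace.exp Q i j

/-- `π` is a stationary distribution of the generator `Q`: `πQ = 0`, `π1 = 1`. -/
def IsStationaryDist {n : Type*} [Fintype n] (Q : Matrix n n ℝ) (π : n → ℝ) : Prop :=
  (∀ i, 0 ≤ π i) ∧ (∑ i, π i = 1) ∧ π ᵥ* Q = 0

/-- The rank-one matrix `1π`. -/
def onePi {n : Type*} (π : n → ℝ) : Matrix n n ℝ :=
  Matrix.of fun _ j => π j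

/-- `Ds` is the deviation matrix `D♯ = ∫₀^∞ (e^{Qu} − 1π) du` of `Q`
(entrywise convergent integral). -/
def IsDeviation {n : Type*} [Fintype n] [DecidableEq n] (Q : Matrix n n ℝ) (π : n → ℝ)
    (Ds : Matrix n n ℝ) : Prop :=
  ∀ i j, IntegrableOn (fun u => NormedSpace.exp (u • Q) i j - π j) (Set.Ioi (0:ℝ)) MeasureTheory.volume ∧
    Ds i j = ∫ u in Set.Ioi (0:ℝ), (NormedSpace.exp (u • Q) i j - π j)

/-- `Dt` is the transient deviation matrix `D♯(t) = ∫₀^t (e^{Qu} − 1π) du` of `Q`. -/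
def IsTransientDeviation {n : Type*} [Fintype n] [DecidableEq n] (Q : Matrix n n ℝ) (π : n → ℝ)
    (Dt : ℝ → Matrix n n ℝ) : Prop :=
  ∀ t i j, Dt t i j = ∫ u in Set.Ioc (0:ℝ) t, (NormedSpace.exp (u • Q) i j - π j)

/-- The `p × 2p` matrix `I_p ⊗ 1₂ᵀ`, where the `2p` index set is `Fin p × Fin 2`. -/
def kronA (p : ℕ) : Matrix (Fin p) (Fin p × Fin 2) ℝ :=
  Matrix.of fun i jk => if jk.1 = i then 1 else 0

/-- The slowness condition `λ_i > S_i = ∑_{j≠i} q_{ij} = -G i i` for a generator `G`. -/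
def IsSlow {p : ℕ} (G : Matrix (Fin p) (Fin p) ℝ) (lam : Fin p → ℝ) : Prop :=
  ∀ i, -G i i < lam i

/-- The `2p × 2p` generator `Q̄` of the MTCP associated with a slow MMPP with
modulating generator `G` and rates `λ`: diagonal `2×2` blocks
`[[−λ_i, λ_i − S_i],[λ_i − S_i, −λ_i]]` (note `λ_i − S_i = λ_i + G i i`) and
off-diagonal blocks `q_{ij} I₂`. -/
def Qbar {p : ℕ} (G : Matrix (Fin p) (Fin p) ℝ) (lam : Fin p → ℝ) :
    Matrix (Fin p × Fin 2) (Fin p × Fin 2) ℝ :=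
  Matrix.of fun ik jl =>
    if ik.1 = jl.1 then (if ik.2 = jl.2 then -lam ik.1 else lam ik.1 + G ik.1 ik.1)
    else (if ik.2 = jl.2 then G ik.1 jl.1 else 0)

/-- The `2p × 2p` generator `Q̃` of the coupled MAP built from the MMPP: diagonal
blocks `[[−(λ_i + S_i), λ_i],[λ_i, −(λ_i + S_i)]]` (note `−(λ_i+S_i) = G i i − λ_i`)
and off-diagonal blocks `q_{ij} I₂`. -/
def Qtil {p : ℕ} (G : Matrix (Fin p) (Fin p) ℝ) (lam : Fin p → ℝ) :
    Matrix (Fin p × Fin 2) (Fin p × Fin 2) ℝ :=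
  Matrix.of fun ik jl =>
    if ik.1 = jl.1 then (if ik.2 = jl.2 then G ik.1 ik.1 - lam ik.1 else lam ik.1)
    else (if ik.2 = jl.2 then G ik.1 jl.1 else 0)

/-- The event-intensity matrix `D̄ = Q̄ − diag(Q̄)` of the associated MTCP. -/
def Dbar {p : ℕ} (G : Matrix (Fin p) (Fin p) ℝ) (lam : Fin p → ℝ) :
    Matrix (Fin p × Fin 2) (Fin p × Fin 2) ℝ :=
  Qbar G lam - Matrix.diagonal fun ik => Qbar G lam ik ik

/-- The event-intensity matrix `D̃` of the coupled MMPP: block diagonal with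
blocks `[[0, λ_i],[λ_i, 0]]`. -/
def Dtil {p : ℕ} (lam : Fin p → ℝ) : Matrix (Fin p × Fin 2) (Fin p × Fin 2) ℝ :=
  Matrix.of fun ik jl => if ik.1 = jl.1 ∧ ik.2 ≠ jl.2 then lam ik.1 else 0

/-- The common stationary distribution `π = (1/2) ϑ (I_p ⊗ 1₂ᵀ)` of `Q̄` and `Q̃`. -/
noncomputable def piHat {p : ℕ} (θ : Fin p → ℝ) : Fin p × Fin 2 → ℝ :=
  (1/2 : ℝ) • (θ ᵥ* kronA p)

/-!
Both generators are intertwined with `G` by `I_p ⊗ 1₂`: `Q̄ (I_p ⊗ 1₂) = (I_p ⊗ 1₂) G` and the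
same for `Q̃`, and dually `(I_p ⊗ 1₂ᵀ) Q̄ = G (I_p ⊗ 1₂ᵀ)`. Passing to exponentials,
`e^{Q̄u} (I_p ⊗ 1₂) = (I_p ⊗ 1₂) e^{Gu} = e^{Q̃u} (I_p ⊗ 1₂)`. Since `Q̄` and `Q̃` share the
stationary distribution `π`, the integrands `e^{Qu} − 1π` defining the two deviation matrices
therefore agree after multiplication by `I_p ⊗ 1₂` on the right, or by `I_p ⊗ 1₂ᵀ` on the left.
-/

namespace Matrix

variable {m n : Type*} [Fintype m] [Fintype n] [DecidableEq m] [DecidableEq n]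
  {M : Matrix m m ℝ} {N : Matrix n n ℝ} {X : Matrix m n ℝ}

theorem exp_mul_eq_mul_exp_of_mul_eq (h : M * X = X * N) :
    NormedSpace.exp M * X = X * NormedSpace.exp N := by
  let := Matrix.linftyOpNormedRing (n := m) (α := ℝ)
  let := Matrix.linftyOpNormedAlgebra (n := m) (R := ℝ) (α := ℝ)
  let := Matrix.linftyOpNormedRing (n := n) (α := ℝ)
  let := Matrix.linftyOpNormedAlgebra (n := n) (R := ℝ) (α := ℝ)
  have hpow (k : ℕ) : M ^ k * X = X * N ^ k := by
    induction k with
    | zero => simp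
    | succ k ih => rw [pow_succ, pow_succ, Matrix.mul_assoc, h, ← Matrix.mul_assoc, ih,
        Matrix.mul_assoc]
  have hM := (NormedSpace.exp_series_hasSum_exp' (𝕂 := ℝ) M).map
    (mulRightLinearMap m ℝ X) (LinearMap.continuous_of_finiteDimensional _)
  have hN := (NormedSpace.exp_series_hasSum_exp' (𝕂 := ℝ) N).map
    (mulLeftLinearMap n ℝ X) (LinearMap.continuous_of_finiteDimensional _)
  refine hM.unique ?_
  convert hN using 1
  · funext k
    simp [hpow]
  -- the two sides differ only in the (definitionally equal) topology used to define `exp`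
  · rfl

theorem exp_smul_mul_eq_mul_exp_smul_of_mul_eq (h : M * X = X * N) (u : ℝ) :
    NormedSpace.exp (u • M) * X = X * NormedSpace.exp (u • N) :=
  exp_mul_eq_mul_exp_of_mul_eq (by rw [Matrix.smul_mul, h, Matrix.mul_smul])

end Matrix

namespace IsDeviation

variable {n m : Type*} [Fintype n] [DecidableEq n]
  {Q Q' : Matrix n n ℝ} {π : n → ℝ} {D D' : Matrix n n ℝ}

theorem mul_apply_eq_integral (hD : IsDeviation Q π D) (X : Matrix n m ℝ) (i : n) (j : m) :
    (D * X) i j = ∫ u in Set.Ioi (0 : ℝ), ((NormedSpace.exp (u • Q) - onePi π) * X) i j := by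
  simp only [Matrix.mul_apply, Matrix.sub_apply, onePi, Matrix.of_apply]
  rw [integral_finsetSum _ fun k _ => (hD i k).1.mul_const (X k j)]
  refine Finset.sum_congr rfl fun k _ => ?_
  rw [(hD i k).2, integral_mul_const]

theorem mul_apply_eq_integral_left (hD : IsDeviation Q π D) (X : Matrix m n ℝ) (i : m) (j : n) :
    (X * D) i j = ∫ u in Set.Ioi (0 : ℝ), (X * (NormedSpace.exp (u • Q) - onePi π)) i j := by
  simp only [Matrix.mul_apply, Matrix.sub_apply, onePi, Matrix.of_apply]
  rw [integral_finsetSum _ fun k _ => (hD k j).1.const_mul (X i k)]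
  refine Finset.sum_congr rfl fun k _ => ?_
  rw [(hD k j).2, integral_const_mul]

theorem mul_eq_mul_of_exp_mul_eq (hD : IsDeviation Q π D) (hD' : IsDeviation Q' π D')
    {X : Matrix n m ℝ}
    (h : ∀ u : ℝ, NormedSpace.exp (u • Q) * X = NormedSpace.exp (u • Q') * X) :
    D * X = D' * X := by
  ext i j
  simp only [hD.mul_apply_eq_integral, hD'.mul_apply_eq_integral, Matrix.sub_mul, h]

theorem mul_eq_mul_of_mul_exp_eq (hD : IsDeviation Q π D) (hD' : IsDeviation Q' π D')
    {X : Matrix m n ℝ}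
    (h : ∀ u : ℝ, X * NormedSpace.exp (u • Q) = X * NormedSpace.exp (u • Q')) :
    X * D = X * D' := by
  ext i j
  simp only [hD.mul_apply_eq_integral_left, hD'.mul_apply_eq_integral_left, Matrix.mul_sub, h]

end IsDeviation

section
variable {p : ℕ} {m : Type*}

theorem mul_kronA_transpose_apply (E : Matrix m (Fin p × Fin 2) ℝ) (i : m) (j : Fin p) :
    (E * (kronA p)ᵀ) i j = E i (j, 0) + E i (j, 1) := by
  simp [Matrix.mul_apply, Fintype.sum_prod_type, kronA, Fin.sum_univ_two, Finset.sum_add_distrib]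

theorem kronA_mul_apply (E : Matrix (Fin p × Fin 2) m ℝ) (i : Fin p) (j : m) :
    (kronA p * E) i j = E (i, 0) j + E (i, 1) j := by
  simp [Matrix.mul_apply, Fintype.sum_prod_type, kronA, Fin.sum_univ_two, Finset.sum_add_distrib]

theorem kronA_transpose_mul_apply (E : Matrix (Fin p) m ℝ) (ik : Fin p × Fin 2) (j : m) :
    ((kronA p)ᵀ * E) ik j = E ik.1 j := by
  simp [Matrix.mul_apply, kronA]

theorem mul_kronA_apply (E : Matrix m (Fin p) ℝ) (i : m) (jl : Fin p × Fin 2) :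
    (E * kronA p) i jl = E i jl.1 := by
  simp [Matrix.mul_apply, kronA]

variable (G : Matrix (Fin p) (Fin p) ℝ) (lam : Fin p → ℝ)

theorem Qbar_mul_kronA_transpose : Qbar G lam * (kronA p)ᵀ = (kronA p)ᵀ * G := by
  ext ⟨i, k⟩ j
  rw [mul_kronA_transpose_apply, kronA_transpose_mul_apply]
  fin_cases k <;> by_cases h : i = j <;> simp [Qbar, h]

theorem Qtil_mul_kronA_transpose : Qtil G lam * (kronA p)ᵀ = (kronA p)ᵀ * G := by
  ext ⟨i, k⟩ j
  rw [mul_kronA_transpose_apply, kronA_transpose_mul_apply]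
  fin_cases k <;> by_cases h : i = j <;> simp [Qtil, h]

theorem kronA_mul_Qbar : kronA p * Qbar G lam = G * kronA p := by
  ext i ⟨j, l⟩
  rw [kronA_mul_apply, mul_kronA_apply]
  fin_cases l <;> by_cases h : i = j <;> simp [Qbar, h]

theorem kronA_mul_Qtil : kronA p * Qtil G lam = G * kronA p := by
  ext i ⟨j, l⟩
  rw [kronA_mul_apply, mul_kronA_apply]
  fin_cases l <;> by_cases h : i = j <;> simp [Qtil, h]

end

theorem stmt11_general {p : ℕ} (G : Matrix (Fin p) (Fin p) ℝ) (lam : Fin p → ℝ)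
    (θ : Fin p → ℝ)
    (DsQb DsQt : Matrix (Fin p × Fin 2) (Fin p × Fin 2) ℝ)
    (hDsQb : IsDeviation (Qbar G lam) (piHat θ) DsQb)
    (hDsQt : IsDeviation (Qtil G lam) (piHat θ) DsQt) :
    DsQb * (kronA p)ᵀ = DsQt * (kronA p)ᵀ ∧ kronA p * DsQb = kronA p * DsQt := by
  refine ⟨hDsQb.mul_eq_mul_of_exp_mul_eq hDsQt fun u => ?_,
    hDsQb.mul_eq_mul_of_mul_exp_eq hDsQt fun u => ?_⟩
  · rw [exp_smul_mul_eq_mul_exp_smul_of_mul_eq (Qbar_mul_kronA_transpose G lam),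
      exp_smul_mul_eq_mul_exp_smul_of_mul_eq (Qtil_mul_kronA_transpose G lam)]
  · rw [← exp_smul_mul_eq_mul_exp_smul_of_mul_eq (kronA_mul_Qbar G lam).symm,
      ← exp_smul_mul_eq_mul_exp_smul_of_mul_eq (kronA_mul_Qtil G lam).symm]

theorem stmt11 {p : ℕ} (G : Matrix (Fin p) (Fin p) ℝ) (lam : Fin p → ℝ)
    (hG : IsGenerator G) (hirr : IsIrreducibleGen G) (hslow : IsSlow G lam)
    (θ : Fin p → ℝ) (hθ : IsStationaryDist G θ)
    (DsG : Matrix (Fin p) (Fin p) ℝ) (hDsG : IsDeviation G θ DsG)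
    (DsQb DsQt : Matrix (Fin p × Fin 2) (Fin p × Fin 2) ℝ)
    (hDsQb : IsDeviation (Qbar G lam) (piHat θ) DsQb)
    (hDsQt : IsDeviation (Qtil G lam) (piHat θ) DsQt) :
    DsQb * (kronA p)ᵀ = DsQt * (kronA p)ᵀ ∧ kronA p * DsQb = kronA p * DsQt :=
  stmt11_general G lam θ DsQb DsQt hDsQb hDsQt
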